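/- arXiv:1905.07010 — 3 statements merged into one kernel-verified Lean document; each statement's English description precedes it below -/
import Mathlib

section
/- Let A_0 > 0, κ_0 = (1 + sqrt(1 + 4 A_0))/(sqrt(1 + 4 A_0) - 1), and define a_k = (1 + sqrt(1 + 4 A_k))/2, A_{k+1} = A_k + a_k. If 0 < m̄ ≤ m, then for every k ≥ 0, m̄/κ_0 + m/a_k ≤ m. -/
theorem kappa_ineq (a A : ℕ → ℝ) (A0 : ℝ) (hA0 : 0 < A0) (hA0' : A 0 = A0)
    (κ₀ : ℝ) (hκ : κ₀ = (1 + Real.sqrt (1 + 4 * A0)) / (Real.sqrt (1 + 4 * A0) - 1))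
    (ha : ∀ k, a k = (1 + Real.sqrt (1 + 4 * A k)) / 2)
    (hA : ∀ k, A (k + 1) = A k + a k)
    (mbar m : ℝ) (hmbar : 0 < mbar) (hm : mbar ≤ m) :
    ∀ k, mbar / κ₀ + m / a k ≤ m := by
  set s := Real.sqrt (1 + 4 * A0) with hsdef
  have hs1 : (1:ℝ) < s := by
    have : Real.sqrt 1 < s := Real.sqrt_lt_sqrt (by norm_num) (by linarith)
    simpa using this
  have hAk : ∀ k, A0 ≤ A k := by
    intro k
    induction k with
    | zero => rw [hA0']
    | succ n ih =>
      have hnn : 0 ≤ Real.sqrt (1 + 4 * A n) := Real.sqrt_nonneg _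
      have hak : 0 < a n := by rw [ha]; linarith
      rw [hA]; linarith
  intro k
  have hm0 : 0 < m := lt_of_lt_of_le hmbar hm
  have hsk : s ≤ Real.sqrt (1 + 4 * A k) :=
    Real.sqrt_le_sqrt (by linarith [hAk k])
  have ha0 : (1 + s) / 2 ≤ a k := by rw [ha]; linarith
  have hpos : (0:ℝ) < (1 + s) / 2 := by linarith
  have h2 : m / a k ≤ m / ((1 + s) / 2) :=
    div_le_div_of_nonneg_left hm0.le hpos ha0
  have h3 : mbar / κ₀ + m / ((1 + s) / 2) ≤ m := by
    rw [hκ, div_div_eq_mul_div, div_div_eq_mul_div,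
      div_add_div _ _ (by linarith : (1 + s) ≠ 0) (by linarith : (1 + s) ≠ 0),
      div_le_iff₀ (by nlinarith : (0:ℝ) < (1 + s) * (1 + s))]
    nlinarith [mul_le_mul_of_nonneg_right hm (by linarith : (0:ℝ) ≤ s - 1)]
  linarith
end

section
/- Let θ > 1, M̄ > 0, λ_0 > 0, and suppose a sequence {λ_k} of positive reals satisfies: λ_{k} is either unchanged from λ_{k-1} (when λ_{k-1} ≤ 0.9/C with C ≤ M̄) or updated via λ_k = min{λ/θ, 0.9/C} for some λ ≤ λ_0 and C ∈ (0, M̄] with λ > 0.9/C. Then λ_k ≥ min{0.9/(θ M̄), λ_0} for all k. -/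
theorem stepsize_lower_bound (θ Mbar lam0 : ℝ) (hθ : 1 < θ) (hM : 0 < Mbar)
    (hlam0 : 0 < lam0) (lam : ℕ → ℝ) (hpos : ∀ k, 0 < lam k) (hinit : lam 0 = lam0)
    (hupd : ∀ k : ℕ, 1 ≤ k →
      (∃ C : ℝ, 0 < C ∧ C ≤ Mbar ∧ lam (k - 1) ≤ 0.9 / C ∧ lam k = lam (k - 1)) ∨
      (∃ l C : ℝ, 0 < C ∧ C ≤ Mbar ∧ l ≤ lam0 ∧ 0.9 / C < l ∧
        lam k = min (l / θ) (0.9 / C))) :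
    ∀ k, min (0.9 / (θ * Mbar)) lam0 ≤ lam k := by
  have hθ0 : 0 < θ := lt_trans one_pos hθ
  intro k
  induction k with
  | zero => rw [hinit]; exact min_le_right _ _
  | succ n ih =>
    rcases hupd (n + 1) (Nat.le_add_left 1 n) with ⟨C, hC, hCM, hle, heq⟩ |
      ⟨l, C, hC, hCM, hl0, hlt, heq⟩
    · simpa [heq] using ih
    · rw [heq]
      have h1 : 0.9 / (θ * Mbar) ≤ 0.9 / C := by
        apply div_le_div_of_nonneg_left (by norm_num) hC
        calc C ≤ Mbar := hCM
          _ ≤ θ * Mbar := le_mul_of_one_le_left hM.le hθ.le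
      have h2 : 0.9 / (θ * Mbar) ≤ l / θ := by
        rw [div_le_div_iff₀ (by positivity) hθ0]
        have : 0.9 / C < l := hlt
        have h3 : 0.9 ≤ l * C := by
          rw [div_lt_iff₀ hC] at this
          linarith
        calc 0.9 * θ ≤ l * C * θ := by nlinarith
          _ = l * (θ * C) := by ring
          _ ≤ l * (θ * Mbar) := by
              apply mul_le_mul_of_nonneg_left _ (by nlinarith [div_pos (by norm_num : (0.9:ℝ) > 0) hC])
              exact mul_le_mul_of_nonneg_left hCM hθ0.le
      exact (min_le_left _ _).trans (le_min h2 h1)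
end

section
/- Let ψ be (1/λ + c)-strongly convex with minimizer y over ℝⁿ, where λ, c > 0, of the form ψ(u) = γ̃(u) + (1/(2λ))‖u − x̃‖² with γ̃ convex. Define γ(u) := γ̃(y) + (1/λ)⟨x̃ − y, u − y⟩ + (c/2)‖u − y‖². Then γ(u) + (1/(2λ))‖u − x̃‖² = γ̃(y) + (1/(2λ))‖y − x̃‖² + ((1/λ + c)/2)‖y − u‖² for all u, and consequently γ ≤ γ̃ on ℝⁿ with γ(y) = γ̃(y), and y is the unique minimizer of u ↦ γ(u) + (1/(2λ))‖u − x̃‖². -/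
set_option maxHeartbeats 800000


open scoped RealInnerProductSpace

theorem quadratic_minorant_properties {n : ℕ}
    (γt : EuclideanSpace ℝ (Fin n) → ℝ) (lam c : ℝ) (hlam : 0 < lam) (hc : 0 < c)
    (xt y : EuclideanSpace ℝ (Fin n))
    (ψ : EuclideanSpace ℝ (Fin n) → ℝ)
    (hψ : ∀ u, ψ u = γt u + (1 / (2 * lam)) * ‖u - xt‖ ^ 2)
    (hsc : ∀ z z' : EuclideanSpace ℝ (Fin n), ∀ β : ℝ, 0 ≤ β → β ≤ 1 →
      ψ (β • z + (1 - β) • z') ≤ β * ψ z + (1 - β) * ψ z'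
        - (β * (1 - β) * (1 / lam + c) / 2) * ‖z - z'‖ ^ 2)
    (hmin : ∀ u, ψ y ≤ ψ u)
    (γ : EuclideanSpace ℝ (Fin n) → ℝ)
    (hγ : ∀ u, γ u = γt y + (1 / lam) * ⟪xt - y, u - y⟫ + (c / 2) * ‖u - y‖ ^ 2) :
    (∀ u, γ u + (1 / (2 * lam)) * ‖u - xt‖ ^ 2
        = γt y + (1 / (2 * lam)) * ‖y - xt‖ ^ 2 + ((1 / lam + c) / 2) * ‖y - u‖ ^ 2)
    ∧ (∀ u, γ u ≤ γt u) ∧ γ y = γt y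
    ∧ (∀ u, u ≠ y →
        γ y + (1 / (2 * lam)) * ‖y - xt‖ ^ 2 < γ u + (1 / (2 * lam)) * ‖u - xt‖ ^ 2) := by
  have hK : 0 < 1 / lam + c := by positivity
  -- the identity
  have hid : ∀ u, γ u + (1 / (2 * lam)) * ‖u - xt‖ ^ 2
      = γt y + (1 / (2 * lam)) * ‖y - xt‖ ^ 2 + ((1 / lam + c) / 2) * ‖y - u‖ ^ 2 := by
    intro u
    have e1 : u - xt = (u - y) + (y - xt) := by abel
    have e2 : ‖u - xt‖ ^ 2 = ‖u - y‖ ^ 2 + 2 * ⟪u - y, y - xt⟫ + ‖y - xt‖ ^ 2 := by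
      rw [e1, norm_add_sq_real]
    have e3 : ⟪xt - y, u - y⟫ = -⟪u - y, y - xt⟫ := by
      have h : xt - y = -(y - xt) := by abel
      rw [h, inner_neg_left, real_inner_comm]
    have e4 : ‖y - u‖ = ‖u - y‖ := norm_sub_rev _ _
    rw [hγ u, e2, e3, e4]
    field_simp
    ring
  -- strong-convexity growth from the minimizer
  have key : ∀ u, ψ y + ((1 / lam + c) / 2) * ‖y - u‖ ^ 2 ≤ ψ u := by
    intro u
    have h1 : ∀ β : ℝ, β ∈ Set.Ioc (0 : ℝ) 1 →
        (1 - β) * ((1 / lam + c) / 2) * ‖u - y‖ ^ 2 ≤ ψ u - ψ y := by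
      intro β hβ
      have h2 := hsc u y β hβ.1.le hβ.2
      have h3 := hmin (β • u + (1 - β) • y)
      have h4 : β * (1 - β) * (1 / lam + c) / 2 * ‖u - y‖ ^ 2 ≤ β * (ψ u - ψ y) := by
        nlinarith
      have hb := hβ.1
      nlinarith
    have h5 : Filter.Tendsto (fun β : ℝ => (1 - β) * ((1 / lam + c) / 2) * ‖u - y‖ ^ 2)
        (nhdsWithin 0 (Set.Ioc (0 : ℝ) 1)) (nhds (((1 / lam + c) / 2) * ‖u - y‖ ^ 2)) := by
      have : Continuous (fun β : ℝ => (1 - β) * ((1 / lam + c) / 2) * ‖u - y‖ ^ 2) := by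
        continuity
      have h := this.continuousAt (x := (0 : ℝ))
      have := h.tendsto.mono_left (nhdsWithin_le_nhds (s := Set.Ioc (0:ℝ) 1))
      simpa using this
    have hne : (nhdsWithin (0 : ℝ) (Set.Ioc (0 : ℝ) 1)).NeBot := by
      apply mem_closure_iff_nhdsWithin_neBot.mp
      have : (0 : ℝ) ∈ closure (Set.Ioo (0 : ℝ) 1) := by
        rw [closure_Ioo (by norm_num : (0:ℝ) ≠ 1)]
        simp
      exact closure_mono Set.Ioo_subset_Ioc_self this
    have h6 : ((1 / lam + c) / 2) * ‖u - y‖ ^ 2 ≤ ψ u - ψ y :=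
      le_of_tendsto h5 (Filter.eventually_of_mem self_mem_nhdsWithin h1)
    have e4 : ‖y - u‖ = ‖u - y‖ := norm_sub_rev _ _
    rw [e4]; linarith
  have hle : ∀ u, γ u ≤ γt u := by
    intro u
    have := key u
    rw [hψ u, hψ y] at this
    have h := hid u
    linarith
  have hγy : γ y = γt y := by
    rw [hγ y]
    simp
  refine ⟨hid, hle, hγy, ?_⟩
  intro u hu
  have h1 := hid u
  have h2 := hid y
  have hpos : 0 < ‖y - u‖ ^ 2 := by
    have h : (0:ℝ) < ‖y - u‖ := norm_sub_pos_iff.mpr (Ne.symm hu)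
    positivity
  have h2' : γ y + (1 / (2 * lam)) * ‖y - xt‖ ^ 2
      = γt y + (1 / (2 * lam)) * ‖y - xt‖ ^ 2 := by rw [h2]; simp
  have h3 : 0 < ((1 / lam + c) / 2) * ‖y - u‖ ^ 2 := mul_pos (by positivity) hpos
  linarith
end
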